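/- (Global energy stability of the semi-discrete scheme.) Let m : Fin N → ℝ. Suppose u : ℝ → Fin N → E is continuously differentiable in time, p : ℝ → Fin N → ℝ is continuous, and for every time t and every node i: m i • (du/dt)(t) i = RHS i (computed from u t and p t), and the discrete continuity constraint holds at every node. If in addition dadd i j ≥ 0 and dp i j ≥ 0 for all i ≠ j, then the total kinetic energy t ↦ Σ_i m i·‖u t i‖²/2 is a nonincreasing (antitone) function of t. -/

import Mathlib

/-!
Testing the momentum equation against `u` gives `dE/dt = Σ_i ⟪RHS i, u i⟫`. Summing each edge
`{i, j}` from both ends, the antisymmetry of `c` makes the convective terms cancel, the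
artificial viscosity contributes `-Σ dadd i j ‖u j - u i‖²`, and the pressure contributes
`-Σ (p j - p i) ⟪u j + u i, c i j⟫`. Discrete summation by parts together with the continuity
constraint turns the latter into `-Σ dp i j (p j - p i)²`, so the energy rate is nonpositive.
-/

open scoped RealInnerProductSpace

open Finset

section OffDiagonalSums

variable {ι : Type*} [Fintype ι] [DecidableEq ι]

theorem sum_sum_erase_comm {M : Type*} [AddCommMonoid M] (f : ι → ι → M) :
    ∑ i, ∑ j ∈ univ.erase i, f i j = ∑ i, ∑ j ∈ univ.erase i, f j i :=
  sum_comm' fun i j => by simp [ne_comm]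

theorem two_mul_sum_sum_erase (f : ι → ι → ℝ) :
    2 * ∑ i, ∑ j ∈ univ.erase i, f i j = ∑ i, ∑ j ∈ univ.erase i, (f i j + f j i) := by
  simp only [sum_add_distrib, ← sum_sum_erase_comm (fun i j => f j i)]
  ring

/-- Discrete summation by parts for an antisymmetric edge quantity. -/
theorem sum_sum_erase_sub_mul_of_antisymm (q : ι → ℝ) {b : ι → ι → ℝ}
    (hb : ∀ i j, b j i = -b i j) :
    ∑ i, ∑ j ∈ univ.erase i, (q j - q i) * b i j
      = -2 * ∑ i, q i * ∑ j ∈ univ.erase i, b i j := by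
  have hswap : ∑ i, ∑ j ∈ univ.erase i, q j * b i j
      = -∑ i, ∑ j ∈ univ.erase i, q i * b i j := by
    rw [sum_sum_erase_comm, ← sum_neg_distrib]
    refine sum_congr rfl fun i _ => ?_
    rw [← sum_neg_distrib]
    exact sum_congr rfl fun j _ => by rw [hb, mul_neg]
  have hrow : ∑ i, q i * ∑ j ∈ univ.erase i, b i j = ∑ i, ∑ j ∈ univ.erase i, q i * b i j := by
    simp only [mul_sum]
  rw [hrow]
  simp only [sub_mul, sum_sub_distrib, hswap]
  ring

end OffDiagonalSums

section EnergyBalance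

variable {ι E : Type*} [NormedAddCommGroup E] [InnerProductSpace ℝ E]

noncomputable def edgePower (c : ι → ι → E) (dadd : ι → ι → ℝ) (v : ι → E) (q : ι → ℝ)
    (i j : ι) : ℝ :=
  (dadd i j - ⟪((1 : ℝ) / 2) • (v j + v i), c i j⟫) * ⟪v j - v i, v i⟫
    - (q j - q i) * ⟪c i j, v i⟫ - ⟪((1 : ℝ) / 2) • (v j + v i), c i j⟫ * ‖v i‖ ^ 2

theorem edgePower_add_swap {c : ι → ι → E} (hc : ∀ i j, c j i = -c i j) {dadd : ι → ι → ℝ}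
    (hdadd : ∀ i j, dadd i j = dadd j i) (v : ι → E) (q : ι → ℝ) (i j : ι) :
    edgePower c dadd v q i j + edgePower c dadd v q j i
      = -(dadd i j * ‖v j - v i‖ ^ 2) - (q j - q i) * ⟪v j + v i, c i j⟫ := by
  simp only [edgePower, hc i j, hdadd j i, ← real_inner_self_eq_norm_sq, inner_neg_left,
    inner_neg_right, real_inner_smul_right, inner_sub_left, inner_sub_right, inner_add_right,
    real_inner_comm (c i j), real_inner_comm (v j) (v i)]
  ring

variable [Fintype ι]

theorem hasDerivAt_sum_mul_norm_sq_div_two (m : ι → ℝ) {u u' : ℝ → ι → E} {t : ℝ}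
    (hu : ∀ i, HasDerivAt (fun s => u s i) (u' t i) t) :
    HasDerivAt (fun s => ∑ i, m i * ‖u s i‖ ^ 2 / 2) (∑ i, ⟪m i • u' t i, u t i⟫) t := by
  refine HasDerivAt.fun_sum fun i _ => ?_
  refine (((hu i).norm_sq.const_mul (m i)).div_const 2).congr_deriv ?_
  rw [real_inner_smul_left, real_inner_comm]
  ring

variable [DecidableEq ι]

noncomputable def momentumRHS (c : ι → ι → E) (dadd : ι → ι → ℝ) (v : ι → E) (q : ι → ℝ)
    (i : ι) : E :=
  (∑ j ∈ univ.erase i,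
      ((dadd i j - ⟪((1 : ℝ) / 2) • (v j + v i), c i j⟫) • (v j - v i) - (q j - q i) • c i j))
    - (∑ j ∈ univ.erase i, ⟪((1 : ℝ) / 2) • (v j + v i), c i j⟫) • v i

theorem inner_momentumRHS_self (c : ι → ι → E) (dadd : ι → ι → ℝ) (v : ι → E) (q : ι → ℝ)
    (i : ι) :
    ⟪momentumRHS c dadd v q i, v i⟫ = ∑ j ∈ univ.erase i, edgePower c dadd v q i j := by
  simp only [momentumRHS, edgePower, inner_sub_left, sum_inner, real_inner_smul_left,
    real_inner_self_eq_norm_sq, sum_mul, ← sum_sub_distrib]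

theorem two_mul_sum_inner_momentumRHS_self {c : ι → ι → E} (hc : ∀ i j, c j i = -c i j)
    {dadd : ι → ι → ℝ} (hdadd : ∀ i j, dadd i j = dadd j i) (v : ι → E) (q : ι → ℝ) :
    2 * ∑ i, ⟪momentumRHS c dadd v q i, v i⟫
      = -∑ i, ∑ j ∈ univ.erase i, dadd i j * ‖v j - v i‖ ^ 2
        - ∑ i, ∑ j ∈ univ.erase i, (q j - q i) * ⟪v j + v i, c i j⟫ := by
  simp only [inner_momentumRHS_self, two_mul_sum_sum_erase, edgePower_add_swap hc hdadd,
    sub_eq_add_neg, sum_add_distrib, sum_neg_distrib]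

theorem sum_pressure_work_eq_of_continuity {c : ι → ι → E} (hc : ∀ i j, c j i = -c i j)
    {dp : ι → ι → ℝ} (hdp : ∀ i j, dp i j = dp j i) {v : ι → E} {q : ι → ℝ}
    (hcont : ∀ i, ∑ j ∈ univ.erase i, (dp i j * (q j - q i) - ⟪v j + v i, c i j⟫) = 0) :
    ∑ i, ∑ j ∈ univ.erase i, (q j - q i) * ⟪v j + v i, c i j⟫
      = ∑ i, ∑ j ∈ univ.erase i, dp i j * (q j - q i) ^ 2 := by
  have hrow : ∀ i, ∑ j ∈ univ.erase i, ⟪v j + v i, c i j⟫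
      = ∑ j ∈ univ.erase i, dp i j * (q j - q i) := fun i => by
    rw [← sub_eq_zero, ← sum_sub_distrib, ← neg_eq_zero, ← sum_neg_distrib]
    simpa using hcont i
  have hflux : ∀ i j, ⟪v i + v j, c j i⟫ = -⟪v j + v i, c i j⟫ := fun i j => by
    rw [hc, inner_neg_right, add_comm]
  have hgrad : ∀ i j, dp j i * (q i - q j) = -(dp i j * (q j - q i)) := fun i j => by
    rw [hdp]; ring
  rw [sum_sum_erase_sub_mul_of_antisymm q hflux]
  simp only [hrow, ← sum_sum_erase_sub_mul_of_antisymm q hgrad]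
  exact sum_congr rfl fun i _ => sum_congr rfl fun j _ => by ring

theorem sum_inner_momentumRHS_self_nonpos {c : ι → ι → E} (hc : ∀ i j, c j i = -c i j)
    {dadd dp : ι → ι → ℝ} (hdadd : ∀ i j, dadd i j = dadd j i) (hdp : ∀ i j, dp i j = dp j i)
    (hdadd_nn : ∀ i j, i ≠ j → 0 ≤ dadd i j) (hdp_nn : ∀ i j, i ≠ j → 0 ≤ dp i j)
    {v : ι → E} {q : ι → ℝ}
    (hcont : ∀ i, ∑ j ∈ univ.erase i, (dp i j * (q j - q i) - ⟪v j + v i, c i j⟫) = 0) :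
    ∑ i, ⟪momentumRHS c dadd v q i, v i⟫ ≤ 0 := by
  have hvisc : 0 ≤ ∑ i, ∑ j ∈ univ.erase i, dadd i j * ‖v j - v i‖ ^ 2 :=
    sum_nonneg fun i _ => sum_nonneg fun j hj =>
      mul_nonneg (hdadd_nn i j (ne_of_mem_erase hj).symm) (sq_nonneg _)
  have hpres : 0 ≤ ∑ i, ∑ j ∈ univ.erase i, dp i j * (q j - q i) ^ 2 :=
    sum_nonneg fun i _ => sum_nonneg fun j hj =>
      mul_nonneg (hdp_nn i j (ne_of_mem_erase hj).symm) (sq_nonneg _)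
  have h2 := two_mul_sum_inner_momentumRHS_self hc hdadd v q
  rw [sum_pressure_work_eq_of_continuity hc hdp hcont] at h2
  linarith

end EnergyBalance

theorem global_energy_stability_semidiscrete_general
    (d N : ℕ)
    (m : Fin N → ℝ)
    (c : Fin N → Fin N → EuclideanSpace ℝ (Fin d))
    (hc : ∀ i j, c j i = -c i j)
    (dadd dp : Fin N → Fin N → ℝ)
    (hdadd_symm : ∀ i j, dadd i j = dadd j i)
    (hdp_symm : ∀ i j, dp i j = dp j i)
    (u : ℝ → Fin N → EuclideanSpace ℝ (Fin d))
    (u' : ℝ → Fin N → EuclideanSpace ℝ (Fin d))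
    (p : ℝ → Fin N → ℝ)
    (hu' : ∀ i t, HasDerivAt (fun s => u s i) (u' t i) t)
    (hscheme : ∀ t i, m i • u' t i =
      (∑ j ∈ Finset.univ.erase i,
        ((dadd i j - ⟪((1 : ℝ) / 2) • (u t j + u t i), c i j⟫) • (u t j - u t i)
          - (p t j - p t i) • c i j))
      - (∑ j ∈ Finset.univ.erase i,
          ⟪((1 : ℝ) / 2) • (u t j + u t i), c i j⟫) • u t i)
    (hcont : ∀ t i, ∑ j ∈ Finset.univ.erase i,
      (dp i j * (p t j - p t i) - ⟪u t j + u t i, c i j⟫) = 0)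
    (hdadd_nn : ∀ i j, i ≠ j → 0 ≤ dadd i j)
    (hdp_nn : ∀ i j, i ≠ j → 0 ≤ dp i j) :
    Antitone fun t => ∑ i, m i * ‖u t i‖ ^ 2 / 2 := by
  refine antitone_of_hasDerivAt_nonpos
    (fun t => hasDerivAt_sum_mul_norm_sq_div_two m fun i => hu' i t) fun t => ?_
  have hrate : ∀ i, m i • u' t i = momentumRHS c dadd (u t) (p t) i := hscheme t
  simp only [hrate]
  exact sum_inner_momentumRHS_self_nonpos hc hdadd_symm hdp_symm hdadd_nn hdp_nn (hcont t)

/-- Global energy stability of the semi-discrete scheme: if `dadd` and `dp`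
are nonnegative off the diagonal, the total kinetic energy
`t ↦ Σ_i m i · ‖u t i‖²/2` is nonincreasing along solutions. -/
theorem global_energy_stability_semidiscrete
    (d N : ℕ) (hd : 1 ≤ d) (hN : 1 ≤ N)
    (m : Fin N → ℝ)
    (c : Fin N → Fin N → EuclideanSpace ℝ (Fin d))
    (hc : ∀ i j, c j i = -c i j)
    (dadd dp : Fin N → Fin N → ℝ)
    (hdadd_symm : ∀ i j, dadd i j = dadd j i)
    (hdp_symm : ∀ i j, dp i j = dp j i)
    (u : ℝ → Fin N → EuclideanSpace ℝ (Fin d))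
    (u' : ℝ → Fin N → EuclideanSpace ℝ (Fin d))
    (p : ℝ → Fin N → ℝ)
    (hu' : ∀ i t, HasDerivAt (fun s => u s i) (u' t i) t)
    (hu'cont : ∀ i, Continuous fun t => u' t i)
    (hpcont : ∀ i, Continuous fun t => p t i)
    (hscheme : ∀ t i, m i • u' t i =
      (∑ j ∈ Finset.univ.erase i,
        ((dadd i j - ⟪((1 : ℝ) / 2) • (u t j + u t i), c i j⟫) • (u t j - u t i)
          - (p t j - p t i) • c i j))
      - (∑ j ∈ Finset.univ.erase i,
          ⟪((1 : ℝ) / 2) • (u t j + u t i), c i j⟫) • u t i)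
    (hcont : ∀ t i, ∑ j ∈ Finset.univ.erase i,
      (dp i j * (p t j - p t i) - ⟪u t j + u t i, c i j⟫) = 0)
    (hdadd_nn : ∀ i j, i ≠ j → 0 ≤ dadd i j)
    (hdp_nn : ∀ i j, i ≠ j → 0 ≤ dp i j) :
    Antitone fun t => ∑ i, m i * ‖u t i‖ ^ 2 / 2 :=
  global_energy_stability_semidiscrete_general d N m c hc dadd dp hdadd_symm hdp_symm u u' p hu'
    hscheme hcont hdadd_nn hdp_nn
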